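/- Let D be a nonnegative random variable with E[D] = D̄ > 0 and E[D²] < ∞, let C ≥ 0, and let γ* be the fixed point satisfying E[(1/2)max(D,γ*)²+C] = γ* E[max(D,γ*)]. Then for any γ_K > 0, the excess ratio E[(1/2)max(D,γ_K)² + C]/E[max(D,γ_K)] − γ* is at most (γ_K − γ*)²/D̄. -/

import Mathlib

/-!
Write `h_b(y) = y²/2 - b y = (y - b)²/2 - b²/2`. Pointwise, replacing the threshold `b` by `a` changes
`h_b(max(x, ·))` by at most `(a - b)²/2`, since `h_b` is minimised at `y = b`. Taking expectations,
the fixed-point equation `E[h_γ*(max(D, γ*))] = -C` gives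
`E[½ max(D, γ_K)² + C] - γ* E[max(D, γ_K)] ≤ (γ_K - γ*)²/2`, and dividing by
`E[max(D, γ_K)] ≥ E[D] > 0` yields the bound (even with an extra factor `1/2`).
-/

open MeasureTheory

lemma half_sq_max_sub_mul_max_le (x a b : ℝ) :
    (1 / 2) * max x a ^ 2 - b * max x a
      ≤ (1 / 2) * max x b ^ 2 - b * max x b + (1 / 2) * (a - b) ^ 2 := by
  rcases le_total x a with hxa | hxa <;> rcases le_total x b with hxb | hxb <;>
    simp only [max_eq_left, max_eq_right, hxa, hxb] <;> nlinarith

section Threshold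

variable {Ω : Type*} [MeasurableSpace Ω] {μ : Measure Ω} {D : Ω → ℝ}

lemma MeasureTheory.MemLp.max_const [IsFiniteMeasure μ] (hD : MemLp D 2 μ) (γ : ℝ) :
    MemLp (fun ω => max (D ω) γ) 2 μ :=
  hD.sup (memLp_const γ)

lemma integral_half_sq_max_sub_mul_integral_max_le [IsProbabilityMeasure μ]
    (hD : MemLp D 2 μ) (C a b : ℝ) :
    (∫ ω, (1 / 2) * max (D ω) a ^ 2 + C ∂μ) - b * ∫ ω, max (D ω) a ∂μ
      ≤ (∫ ω, (1 / 2) * max (D ω) b ^ 2 + C ∂μ) - b * ∫ ω, max (D ω) b ∂μ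
        + (1 / 2) * (a - b) ^ 2 := by
  have hcost (γ : ℝ) : Integrable (fun ω => (1 / 2) * max (D ω) γ ^ 2 + C) μ :=
    ((hD.max_const γ).integrable_sq.const_mul _).add (integrable_const C)
  have hmax (γ : ℝ) : Integrable (fun ω => b * max (D ω) γ) μ :=
    ((hD.max_const γ).integrable one_le_two).const_mul b
  have hexcess (γ : ℝ) :
      Integrable (fun ω => (1 / 2) * max (D ω) γ ^ 2 + C - b * max (D ω) γ) μ :=
    (hcost γ).sub (hmax γ)
  have hpoint : ∫ ω, (1 / 2) * max (D ω) a ^ 2 + C - b * max (D ω) a ∂μ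
      ≤ ∫ ω, (1 / 2) * max (D ω) b ^ 2 + C - b * max (D ω) b + (1 / 2) * (a - b) ^ 2 ∂μ :=
    integral_mono (hexcess a) ((hexcess b).add (integrable_const _))
      fun ω => by linarith [half_sq_max_sub_mul_max_le (D ω) a b]
  rwa [integral_add (hexcess b) (integrable_const _), integral_sub (hcost a) (hmax a),
    integral_sub (hcost b) (hmax b), integral_const_mul, integral_const_mul, integral_const,
    probReal_univ, one_smul] at hpoint

end Threshold

theorem stmt14_general {Ω : Type*} [MeasurableSpace Ω] (μ : Measure Ω) [IsProbabilityMeasure μ]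
    (D : Ω → ℝ) (C γK γstar : ℝ)
    (hDmeas : Measurable D)
    (hD2 : Integrable (fun ω => (D ω) ^ 2) μ)
    (hDpos : 0 < ∫ ω, D ω ∂μ)
    (hfix : ∫ ω, (1 / 2) * (max (D ω) γstar) ^ 2 + C ∂μ =
      γstar * ∫ ω, max (D ω) γstar ∂μ) :
    (∫ ω, (1 / 2) * (max (D ω) γK) ^ 2 + C ∂μ) / (∫ ω, max (D ω) γK ∂μ) - γstar ≤
      (γK - γstar) ^ 2 / (∫ ω, D ω ∂μ) := by
  have hD : MemLp D 2 μ := (memLp_two_iff_integrable_sq hDmeas.aestronglyMeasurable).2 hD2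
  have hexcess := integral_half_sq_max_sub_mul_integral_max_le hD C γK γstar
  rw [hfix, sub_self, zero_add] at hexcess
  have hmean : ∫ ω, D ω ∂μ ≤ ∫ ω, max (D ω) γK ∂μ :=
    integral_mono (hD.integrable one_le_two) ((hD.max_const γK).integrable one_le_two)
      fun ω => le_max_left _ _
  have hmax_pos := hDpos.trans_le hmean
  rw [div_sub' hmax_pos.ne', div_le_div_iff₀ hmax_pos hDpos]
  nlinarith [sq_nonneg (γK - γstar), mul_pos hDpos hmax_pos]

theorem stmt14 {Ω : Type*} [MeasurableSpace Ω] (μ : Measure Ω) [IsProbabilityMeasure μ]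
    (D : Ω → ℝ) (C γK γstar : ℝ)
    (hDmeas : Measurable D) (hDnn : ∀ᵐ ω ∂μ, 0 ≤ D ω)
    (hD2 : Integrable (fun ω => (D ω) ^ 2) μ)
    (hDpos : 0 < ∫ ω, D ω ∂μ) (hC : 0 ≤ C)
    (hfix : ∫ ω, (1 / 2) * (max (D ω) γstar) ^ 2 + C ∂μ =
      γstar * ∫ ω, max (D ω) γstar ∂μ)
    (hγK : 0 < γK) :
    (∫ ω, (1 / 2) * (max (D ω) γK) ^ 2 + C ∂μ) / (∫ ω, max (D ω) γK ∂μ) - γstar ≤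
      (γK - γstar) ^ 2 / (∫ ω, D ω ∂μ) :=
  stmt14_general μ D C γK γstar hDmeas hD2 hDpos hfix
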